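/- Let A_1, …, A_N be real n×n matrices, τ > 0 and m a positive integer, and suppose the bilinear matrix inequality conditions hold: there exist symmetric positive definite matrices P_{i,r}, scalars α_{irs} > 0, and scalars γ_{jqirs} ≥ 0 with Σ_{s=1}^m γ_{jqirs} < 1 such that A_i^T P_{i,r} + P_{i,r} A_i ≺ Σ_{s≠r} α_{irs} (P_{i,s} − P_{i,r}) for all i, r, and exp(A_i^T τ) P_{j,q} exp(A_i τ) ≺ P_{i,r} + Σ_{s≠r} γ_{jqirs} (P_{i,s} − P_{i,r}) for all i ≠ j and all q, r. Define V_i(x) = max_{1≤r≤m} x^T P_{i,r} x. Then along any trajectory given by a mode sequence i : ℕ → {1,…,N} with i(k+1) ≠ i(k), dwell times δ_k ≥ τ, and states x_{k+1} = exp(δ_k A_{i_k}) x_k with x_0 ≠ 0, the sequence of Lyapunov values at switching instants is strictly decreasing: V_{i_{k+1}}(x_{k+1}) < V_{i_k}(x_k) for all k. -/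

import Mathlib

/-!
Between switches the state is `y = exp (t • Aᵢ) x`. For a piece `r` attaining the maximum in
`Vᵢ y` every `yᵀ (Pᵢₛ - Pᵢᵣ) y` is `≤ 0`, so the first BMI, read as an S-procedure certificate,
forces `d/dt (yᵀ Pᵢᵣ y) = yᵀ (Aᵢᵀ Pᵢᵣ + Pᵢᵣ Aᵢ) y < 0`: the maximum of the pieces drops just to
the right of every time, hence never increases along the flow. Splitting `δₖ = (δₖ - τ) + τ`,
the second BMI, read the same way at a maximising piece of `Vᵢ`, gives
`Vⱼ (exp (τ • Aᵢ) y) < Vᵢ y` at the switch.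
-/

open Matrix NormedSpace

/-- The piece-wise quadratic function `V(x) = max_{1 ≤ r ≤ m} xᵀ P_r x`. -/
noncomputable def pwMax {n m : ℕ} (hm : 0 < m)
    (P : Fin m → Matrix (Fin n) (Fin n) ℝ) (x : Fin n → ℝ) : ℝ :=
  Finset.univ.sup' (Finset.univ_nonempty_iff.mpr ⟨⟨0, hm⟩⟩)
    (fun r : Fin m => x ⬝ᵥ P r *ᵥ x)

open Filter Set Topology

section QuadraticForm

variable {ι : Type*} [Fintype ι]

theorem dotProduct_transpose_mul_mul_mulVec (B M : Matrix ι ι ℝ) (x : ι → ℝ) :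
    x ⬝ᵥ (Bᵀ * M * B) *ᵥ x = (B *ᵥ x) ⬝ᵥ M *ᵥ (B *ᵥ x) := by
  rw [← mulVec_mulVec, ← mulVec_mulVec, dotProduct_mulVec, vecMul_transpose]

theorem mulVec_dotProduct_add_dotProduct_mulVec (A P : Matrix ι ι ℝ) (y : ι → ℝ) :
    (A *ᵥ y) ⬝ᵥ P *ᵥ y + y ⬝ᵥ P *ᵥ (A *ᵥ y) = y ⬝ᵥ (Aᵀ * P + P * A) *ᵥ y := by
  rw [add_mulVec, dotProduct_add, ← mulVec_mulVec, ← mulVec_mulVec, dotProduct_mulVec y Aᵀ,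
    vecMul_transpose]

theorem dotProduct_mulVec_lt_of_posDef_sub {κ : Type*} {P : κ → Matrix ι ι ℝ} {S : Finset κ}
    {c : κ → ℝ} {Q M : Matrix ι ι ℝ} {r : κ} {x : ι → ℝ}
    (h : (Q + ∑ s ∈ S, c s • (P s - P r) - M).PosDef) (hc : ∀ s ∈ S, 0 ≤ c s)
    (hr : ∀ s ∈ S, x ⬝ᵥ P s *ᵥ x ≤ x ⬝ᵥ P r *ᵥ x) (hx : x ≠ 0) :
    x ⬝ᵥ M *ᵥ x < x ⬝ᵥ Q *ᵥ x := by
  have hpos := h.dotProduct_mulVec_pos hx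
  simp only [star_trivial, sub_mulVec, add_mulVec, sum_mulVec, smul_mulVec, dotProduct_sub,
    dotProduct_add, dotProduct_sum, dotProduct_smul, smul_eq_mul] at hpos
  have hsum : ∑ s ∈ S, c s * (x ⬝ᵥ P s *ᵥ x - x ⬝ᵥ P r *ᵥ x) ≤ 0 :=
    Finset.sum_nonpos fun s hs => mul_nonpos_of_nonneg_of_nonpos (hc s hs) (sub_nonpos.2 (hr s hs))
  linarith

end QuadraticForm

section Flow

variable {ι : Type*} [Fintype ι]

theorem HasDerivAt.dotProduct_mulVec_self (P : Matrix ι ι ℝ) {y : ℝ → ι → ℝ} {y' : ι → ℝ}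
    {t : ℝ} (hy : HasDerivAt y y' t) :
    HasDerivAt (fun s => y s ⬝ᵥ P *ᵥ y s) (y' ⬝ᵥ P *ᵥ y t + y t ⬝ᵥ P *ᵥ y') t := by
  have hPy : HasDerivAt (fun s => P *ᵥ y s) (P *ᵥ y') t :=
    (mulVecLin P).toContinuousLinearMap.hasFDerivAt.comp_hasDerivAt t hy
  simpa only [dotProduct, Finset.sum_add_distrib] using
    HasDerivAt.fun_sum (u := Finset.univ) fun i _ =>
      (hasDerivAt_pi.1 hy i).fun_mul (hasDerivAt_pi.1 hPy i)

variable [DecidableEq ι]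

theorem exp_mulVec_ne_zero (A : Matrix ι ι ℝ) {x : ι → ℝ} (hx : x ≠ 0) : exp A *ᵥ x ≠ 0 := by
  simpa using (mulVec_injective_iff_isUnit.2 (isUnit_exp A)).ne hx

attribute [local instance] Matrix.linftyOpNormedRing Matrix.linftyOpNormedAlgebra in
theorem hasDerivAt_exp_smul_mulVec (A : Matrix ι ι ℝ) (x : ι → ℝ) (t : ℝ) :
    HasDerivAt (fun s : ℝ => exp (s • A) *ᵥ x) (A *ᵥ (exp (t • A) *ᵥ x)) t := by
  rw [mulVec_mulVec]
  exact ((LinearMap.applyₗ x).comp toLin'.toLinearMap).toContinuousLinearMap.hasFDerivAt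
    |>.comp_hasDerivAt t (hasDerivAt_exp_smul_const' A t)

theorem hasDerivAt_dotProduct_mulVec_exp_smul_mulVec (A P : Matrix ι ι ℝ) (x : ι → ℝ) (t : ℝ) :
    HasDerivAt (fun s => (exp (s • A) *ᵥ x) ⬝ᵥ P *ᵥ (exp (s • A) *ᵥ x))
      ((exp (t • A) *ᵥ x) ⬝ᵥ (Aᵀ * P + P * A) *ᵥ (exp (t • A) *ᵥ x)) t := by
  rw [← mulVec_dotProduct_add_dotProduct_mulVec]
  exact (hasDerivAt_exp_smul_mulVec A x t).dotProduct_mulVec_self P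

end Flow

section RightDecrease

theorem HasDerivAt.eventually_nhdsGT_lt {f : ℝ → ℝ} {f' t : ℝ} (hf : HasDerivAt f f' t)
    (hf' : f' < 0) : ∀ᶠ z in 𝓝[>] t, f z < f t := by
  filter_upwards [nhdsGT_le_nhdsNE t
    ((hasDerivAt_iff_tendsto_slope.1 hf).eventually (eventually_lt_nhds hf')),
    self_mem_nhdsWithin] with z hslope hz
  exact (slope_neg_iff_of_le (le_of_lt hz)).1 hslope

theorem Finset.eventually_nhdsGT_sup'_lt {ι : Type*} {s : Finset ι} (hs : s.Nonempty)
    {F : ι → ℝ → ℝ} {F' : ι → ℝ} {t : ℝ} (hF : ∀ r ∈ s, HasDerivAt (F r) (F' r) t)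
    (hactive : ∀ r ∈ s, F r t = s.sup' hs (fun r => F r t) → F' r < 0) :
    ∀ᶠ z in 𝓝[>] t, s.sup' hs (fun r => F r z) < s.sup' hs (fun r => F r t) := by
  simp_rw [Finset.sup'_lt_iff]
  refine (eventually_all_finset s).2 fun r hr => ?_
  rcases (Finset.le_sup' (fun r => F r t) hr).eq_or_lt with hmax | hlt
  · rw [← hmax]
    exact (hF r hr).eventually_nhdsGT_lt (hactive r hr hmax)
  · exact ((hF r hr).continuousAt.eventually_lt continuousAt_const hlt).filter_mono
      nhdsWithin_le_nhds

theorem ContinuousOn.le_of_forall_eventually_nhdsGT_le {f : ℝ → ℝ} {a b : ℝ}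
    (hf : ContinuousOn f (Icc a b)) (hab : a ≤ b)
    (hloc : ∀ t ∈ Ico a b, ∀ᶠ z in 𝓝[>] t, f z ≤ f t) : f b ≤ f a :=
  image_le_of_liminf_slope_right_le_deriv_boundary hf (B := fun _ => f a) (B' := fun _ => 0)
    le_rfl continuousOn_const (fun t _ => hasDerivWithinAt_const t _ (f a))
    (fun t ht _ hr => ((hloc t ht).and self_mem_nhdsWithin).frequently.mono
      fun _ ⟨hz, hzt⟩ => ((slope_nonpos_iff_of_le (le_of_lt hzt)).2 hz).trans_lt hr)
    ⟨hab, le_rfl⟩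

end RightDecrease

section pwMax

variable {n m : ℕ} (hm : 0 < m)

theorem dotProduct_mulVec_le_pwMax (P : Fin m → Matrix (Fin n) (Fin n) ℝ) (x : Fin n → ℝ)
    (r : Fin m) : x ⬝ᵥ P r *ᵥ x ≤ pwMax hm P x :=
  Finset.le_sup' (fun r => x ⬝ᵥ P r *ᵥ x) (Finset.mem_univ r)

theorem exists_dotProduct_mulVec_eq_pwMax (P : Fin m → Matrix (Fin n) (Fin n) ℝ)
    (x : Fin n → ℝ) : ∃ r, x ⬝ᵥ P r *ᵥ x = pwMax hm P x := by
  obtain ⟨r, -, hr⟩ := Finset.exists_mem_eq_sup' _ fun r => x ⬝ᵥ P r *ᵥ x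
  exact ⟨r, hr.symm⟩

theorem pwMax_exp_smul_mulVec_le {A : Matrix (Fin n) (Fin n) ℝ}
    {P : Fin m → Matrix (Fin n) (Fin n) ℝ} {α : Fin m → Fin m → ℝ} (hα : ∀ r s, 0 ≤ α r s)
    (hder : ∀ r, (∑ s ∈ Finset.univ.erase r, α r s • (P s - P r) - (Aᵀ * P r + P r * A)).PosDef)
    {x : Fin n → ℝ} (hx : x ≠ 0) {t : ℝ} (ht : 0 ≤ t) :
    pwMax hm P (exp (t • A) *ᵥ x) ≤ pwMax hm P x := by
  have hF r u := hasDerivAt_dotProduct_mulVec_exp_smul_mulVec A (P r) x u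
  have hcont : Continuous fun u => pwMax hm P (exp (u • A) *ᵥ x) :=
    Continuous.finset_sup'_apply _ fun r _ =>
      continuous_iff_continuousAt.2 fun u => (hF r u).continuousAt
  have hdecr (u : ℝ) : ∀ᶠ z in 𝓝[>] u,
      pwMax hm P (exp (z • A) *ᵥ x) < pwMax hm P (exp (u • A) *ᵥ x) :=
    Finset.eventually_nhdsGT_sup'_lt _ (fun r _ => hF r u) fun r _ hr => by
      simpa using dotProduct_mulVec_lt_of_posDef_sub (Q := 0) (by simpa using hder r)
        (fun s _ => hα r s) (fun s _ => (dotProduct_mulVec_le_pwMax hm P _ s).trans_eq hr.symm)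
        (exp_mulVec_ne_zero _ hx)
  simpa using hcont.continuousOn.le_of_forall_eventually_nhdsGT_le ht
    fun u _ => (hdecr u).mono fun _ => le_of_lt

theorem pwMax_mulVec_lt {E : Matrix (Fin n) (Fin n) ℝ} {P P' : Fin m → Matrix (Fin n) (Fin n) ℝ}
    {γ : Fin m → Fin m → Fin m → ℝ} (hγ : ∀ q r s, 0 ≤ γ q r s)
    (hjump : ∀ q r,
      (P r + ∑ s ∈ Finset.univ.erase r, γ q r s • (P s - P r) - Eᵀ * P' q * E).PosDef)
    {x : Fin n → ℝ} (hx : x ≠ 0) : pwMax hm P' (E *ᵥ x) < pwMax hm P x := by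
  obtain ⟨r, hr⟩ := exists_dotProduct_mulVec_eq_pwMax hm P x
  refine (Finset.sup'_lt_iff _).2 fun q _ => ?_
  rw [← hr, ← dotProduct_transpose_mul_mul_mulVec]
  exact dotProduct_mulVec_lt_of_posDef_sub (hjump q r) (fun s _ => hγ q r s)
    (fun s _ => (dotProduct_mulVec_le_pwMax hm P x s).trans_eq hr.symm) hx

end pwMax

theorem pwMax_strictly_decreasing_at_switching_instants_general
    (n N m : ℕ) (hm : 0 < m) (A : Fin N → Matrix (Fin n) (Fin n) ℝ)
    (τ : ℝ)
    (P : Fin N → Fin m → Matrix (Fin n) (Fin n) ℝ)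
    (α : Fin N → Fin m → Fin m → ℝ)
    (γ : Fin N → Fin m → Fin N → Fin m → Fin m → ℝ)
    (hα : ∀ i r s, 0 < α i r s)
    (hγ : ∀ j q i r s, 0 ≤ γ j q i r s)
    (hder : ∀ i r,
      ((∑ s ∈ Finset.univ.erase r, α i r s • (P i s - P i r)) -
        ((A i)ᵀ * P i r + P i r * A i)).PosDef)
    (hjump : ∀ i j, i ≠ j → ∀ q r,
      ((P i r + ∑ s ∈ Finset.univ.erase r, γ j q i r s • (P i s - P i r)) -
        (exp (τ • (A i)ᵀ) * P j q * exp (τ • A i))).PosDef) :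
    ∀ (σ : ℕ → Fin N), (∀ k, σ (k + 1) ≠ σ k) →
    ∀ (δ : ℕ → ℝ), (∀ k, τ ≤ δ k) →
    ∀ (x : ℕ → Fin n → ℝ), (∀ k, x (k + 1) = exp (δ k • A (σ k)) *ᵥ x k) →
    x 0 ≠ 0 →
    ∀ k : ℕ, pwMax hm (P (σ (k + 1))) (x (k + 1)) < pwMax hm (P (σ k)) (x k) := by
  intro σ hσ δ hδ x hx hx0
  have hx_ne (k : ℕ) : x k ≠ 0 := by
    induction k with
    | zero => exact hx0
    | succ k ih => exact hx k ▸ exp_mulVec_ne_zero _ ih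
  intro k
  have hsplit : x (k + 1) = exp (τ • A (σ k)) *ᵥ (exp ((δ k - τ) • A (σ k)) *ᵥ x k) := by
    rw [hx k, mulVec_mulVec, ← Matrix.exp_add_of_commute, ← add_smul, add_sub_cancel]
    exact ((Commute.refl _).smul_left _).smul_right _
  have hjump' := hjump (σ k) (σ (k + 1)) (hσ k).symm
  simp only [← transpose_smul, exp_transpose] at hjump'
  rw [hsplit]
  calc _ < pwMax hm (P (σ k)) (exp ((δ k - τ) • A (σ k)) *ᵥ x k) :=
        pwMax_mulVec_lt hm (fun q r s => hγ _ q _ r s) hjump' (exp_mulVec_ne_zero _ (hx_ne k))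
    _ ≤ pwMax hm (P (σ k)) (x k) :=
        pwMax_exp_smul_mulVec_le hm (fun r s => (hα _ r s).le) (hder _) (hx_ne k)
          (sub_nonneg.2 (hδ k))

/-- under the BMI dwell-time conditions, along any dwell-time-`τ`
switching trajectory starting from a nonzero state, the sequence of Lyapunov values
at switching instants is strictly decreasing. -/
theorem pwMax_strictly_decreasing_at_switching_instants
    (n N m : ℕ) (hm : 0 < m) (A : Fin N → Matrix (Fin n) (Fin n) ℝ)
    (τ : ℝ) (hτ : 0 < τ)
    (P : Fin N → Fin m → Matrix (Fin n) (Fin n) ℝ)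
    (α : Fin N → Fin m → Fin m → ℝ)
    (γ : Fin N → Fin m → Fin N → Fin m → Fin m → ℝ)
    (hPsymm : ∀ i r, (P i r).IsSymm)
    (hPpos : ∀ i r, (P i r).PosDef)
    (hα : ∀ i r s, 0 < α i r s)
    (hγ : ∀ j q i r s, 0 ≤ γ j q i r s)
    (hγsum : ∀ j q i r, ∑ s, γ j q i r s < 1)
    (hder : ∀ i r,
      ((∑ s ∈ Finset.univ.erase r, α i r s • (P i s - P i r)) -
        ((A i)ᵀ * P i r + P i r * A i)).PosDef)
    (hjump : ∀ i j, i ≠ j → ∀ q r,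
      ((P i r + ∑ s ∈ Finset.univ.erase r, γ j q i r s • (P i s - P i r)) -
        (exp (τ • (A i)ᵀ) * P j q * exp (τ • A i))).PosDef) :
    ∀ (σ : ℕ → Fin N), (∀ k, σ (k + 1) ≠ σ k) →
    ∀ (δ : ℕ → ℝ), (∀ k, τ ≤ δ k) →
    ∀ (x : ℕ → Fin n → ℝ), (∀ k, x (k + 1) = exp (δ k • A (σ k)) *ᵥ x k) →
    x 0 ≠ 0 →
    ∀ k : ℕ, pwMax hm (P (σ (k + 1))) (x (k + 1)) < pwMax hm (P (σ k)) (x k) :=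
  pwMax_strictly_decreasing_at_switching_instants_general n N m hm A τ P α γ hα hγ hder hjump
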